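/- arXiv:2605.23016 — 4 statements merged into one kernel-verified Lean document; each statement's English description precedes it below -/
import Mathlib

section
/- Consider the continuous relaxation of the bi-fidelity MFMC optimization: minimize v(n₀, n₁) = 1/n₀ − (1/n₀ − 1/n₁)ρ² over positive reals n₀ ≤ n₁ subject to c₀n₀ + c₁n₁ ≤ C, where 0 < ρ < 1, c₀, c₁, C > 0. If c₀/c₁ > ρ⁻² − 1, then the minimizer is given by r = √(c₀ρ²/(c₁(1−ρ²))), n₀* = C/(c₀ + c₁r), n₁* = n₀*·r, and r > 1 so the constraint n₀ ≤ n₁ is satisfied. -/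
/-!
Write `v(n₀, n₁) = (1 - ρ²)/n₀ + ρ²/n₁`. On the ray `n₁ = r n₀` the product of `v` with the cost
`c₀ n₀ + c₁ n₁` does not depend on `n₀`, and over all ratios `t = n₁/n₀` it equals
`c₀(1 - ρ²) + c₁ρ² + c₁(1 - ρ²) t + c₀ρ²/t`, which by AM-GM is smallest at `t = r`, where
`c₁(1 - ρ²) r² = c₀ρ²`. Hence `v(m) ≥ v(m) · cost(m) / C ≥ v(n*) · cost(n*) / C = v(n*)`,
the budget being exhausted at `n*`. The hypothesis on `c₀/c₁` is exactly `r² > 1`.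
-/

noncomputable def mfmcVariance (ρ n₀ n₁ : ℝ) : ℝ := 1 / n₀ - (1 / n₀ - 1 / n₁) * ρ ^ 2

lemma mfmcVariance_eq (ρ n₀ n₁ : ℝ) :
    mfmcVariance ρ n₀ n₁ = (1 - ρ ^ 2) / n₀ + ρ ^ 2 / n₁ := by
  unfold mfmcVariance; ring

lemma mfmcVariance_mul_cost_of_eq_mul {ρ c₀ c₁ n₀ r : ℝ} (hn₀ : n₀ ≠ 0) (hr : r ≠ 0) :
    mfmcVariance ρ n₀ (n₀ * r) * (c₀ * n₀ + c₁ * (n₀ * r)) =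
      (c₀ + c₁ * r) * ((1 - ρ ^ 2) + ρ ^ 2 / r) := by
  rw [mfmcVariance_eq]; field_simp

lemma add_div_le_add_div_of_eq_mul_sq {p q r t : ℝ} (hp : 0 ≤ p) (ht : 0 < t)
    (hq : q = p * r ^ 2) : p * r + q / r ≤ p * t + q / t := by
  have hdiff : p * t + q / t - (p * r + q / r) = p * (t - r) ^ 2 / t := by
    subst hq; field_simp; ring
  have : 0 ≤ p * (t - r) ^ 2 / t := by positivity
  linarith

lemma mul_add_div_le_of_eq_mul_sq {a b c₀ c₁ r x y : ℝ} (hp : 0 ≤ c₁ * a) (hr : 0 < r)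
    (hx : 0 < x) (hy : 0 < y) (hopt : c₁ * a * r ^ 2 = c₀ * b) :
    (c₀ + c₁ * r) * (a + b / r) ≤ (a / x + b / y) * (c₀ * x + c₁ * y) := by
  have h := add_div_le_add_div_of_eq_mul_sq hp (div_pos hy hx) hopt.symm
  calc (c₀ + c₁ * r) * (a + b / r) = c₀ * a + c₁ * b + (c₁ * a * r + c₀ * b / r) := by
        field_simp; ring
    _ ≤ c₀ * a + c₁ * b + (c₁ * a * (y / x) + c₀ * b / (y / x)) := by linarith
    _ = (a / x + b / y) * (c₀ * x + c₁ * y) := by field_simp; ring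

lemma inv_sq_sub_one_lt_div_iff {ρ c₀ c₁ : ℝ} (hρ : ρ ≠ 0) (hc₁ : 0 < c₁) :
    ρ⁻¹ ^ 2 - 1 < c₀ / c₁ ↔ c₁ * (1 - ρ ^ 2) < c₀ * ρ ^ 2 := by
  have hρ2 : 0 < ρ ^ 2 := by positivity
  rw [show ρ⁻¹ ^ 2 - 1 = (1 - ρ ^ 2) / ρ ^ 2 by field_simp, div_lt_div_iff₀ hρ2 hc₁]
  constructor <;> intro h <;> linarith

theorem stmt_2_general (ρ c₀ c₁ C : ℝ) (hρ : 0 < ρ ∧ ρ < 1) (hc₁ : 0 < c₁)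
    (hC : 0 < C) (hcond : c₀ / c₁ > ρ⁻¹ ^ 2 - 1)
    (r n₀s n₁s : ℝ)
    (hr : r = Real.sqrt (c₀ * ρ ^ 2 / (c₁ * (1 - ρ ^ 2))))
    (hn₀ : n₀s = C / (c₀ + c₁ * r)) (hn₁ : n₁s = n₀s * r) :
    1 < r ∧ 0 < n₀s ∧ n₀s ≤ n₁s ∧ c₀ * n₀s + c₁ * n₁s ≤ C ∧
      ∀ m₀ m₁ : ℝ, 0 < m₀ → m₀ ≤ m₁ → c₀ * m₀ + c₁ * m₁ ≤ C →
        1 / n₀s - (1 / n₀s - 1 / n₁s) * ρ ^ 2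
          ≤ 1 / m₀ - (1 / m₀ - 1 / m₁) * ρ ^ 2 := by
  obtain ⟨hρ0, hρ1⟩ := hρ
  have ha : 0 < 1 - ρ ^ 2 := by nlinarith
  have hcost := (inv_sq_sub_one_lt_div_iff hρ0.ne' hc₁).1 hcond
  have hc₀ : 0 < c₀ := pos_of_mul_pos_left ((by positivity : 0 < c₁ * (1 - ρ ^ 2)).trans hcost)
    (sq_nonneg ρ)
  have hr1 : 1 < r := by
    rw [hr, Real.lt_sqrt zero_le_one, one_pow, one_lt_div (by positivity)]; exact hcost
  have hopt : c₁ * (1 - ρ ^ 2) * r ^ 2 = c₀ * ρ ^ 2 := by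
    rw [hr, Real.sq_sqrt (by positivity)]; field_simp
  have hn₀pos : 0 < n₀s := by rw [hn₀]; positivity
  have hbudget : c₀ * n₀s + c₁ * n₁s = C := by rw [hn₁, hn₀]; field_simp
  refine ⟨hr1, hn₀pos, hn₁ ▸ le_mul_of_one_le_right hn₀pos.le hr1.le, hbudget.le, ?_⟩
  intro m₀ m₁ hm₀ hm01 hm
  have hm₁ : 0 < m₁ := hm₀.trans_le hm01
  have hvm : 0 ≤ mfmcVariance ρ m₀ m₁ := by rw [mfmcVariance_eq]; positivity
  have key : mfmcVariance ρ n₀s n₁s * C ≤ mfmcVariance ρ m₀ m₁ * C :=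
    calc mfmcVariance ρ n₀s n₁s * C = (c₀ + c₁ * r) * ((1 - ρ ^ 2) + ρ ^ 2 / r) := by
          rw [← hbudget, hn₁, mfmcVariance_mul_cost_of_eq_mul hn₀pos.ne' (by positivity)]
      _ ≤ mfmcVariance ρ m₀ m₁ * (c₀ * m₀ + c₁ * m₁) := by
          rw [mfmcVariance_eq]
          exact mul_add_div_le_of_eq_mul_sq (by positivity) (by positivity) hm₀ hm₁ hopt
      _ ≤ mfmcVariance ρ m₀ m₁ * C := mul_le_mul_of_nonneg_left hm hvm
  exact le_of_mul_le_mul_right key hC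

/-- Continuous relaxation of the bi-fidelity MFMC optimization:
minimize `v(n₀, n₁) = 1/n₀ − (1/n₀ − 1/n₁)ρ²` over positive reals `n₀ ≤ n₁`
subject to `c₀n₀ + c₁n₁ ≤ C`.  If `c₀/c₁ > ρ⁻² − 1`, then the minimizer is
`n₀* = C/(c₀ + c₁ r)`, `n₁* = n₀* r` with `r = √(c₀ρ²/(c₁(1−ρ²)))`, and
`r > 1` so the nesting constraint is satisfied. -/
theorem stmt_2 (ρ c₀ c₁ C : ℝ) (hρ : 0 < ρ ∧ ρ < 1) (hc₁ : 0 < c₁) (hc : c₁ < c₀)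
    (hC : 0 < C) (hcond : c₀ / c₁ > ρ⁻¹ ^ 2 - 1)
    (r n₀s n₁s : ℝ)
    (hr : r = Real.sqrt (c₀ * ρ ^ 2 / (c₁ * (1 - ρ ^ 2))))
    (hn₀ : n₀s = C / (c₀ + c₁ * r)) (hn₁ : n₁s = n₀s * r) :
    1 < r ∧ 0 < n₀s ∧ n₀s ≤ n₁s ∧ c₀ * n₀s + c₁ * n₁s ≤ C ∧
      ∀ m₀ m₁ : ℝ, 0 < m₀ → m₀ ≤ m₁ → c₀ * m₀ + c₁ * m₁ ≤ C →
        1 / n₀s - (1 / n₀s - 1 / n₁s) * ρ ^ 2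
          ≤ 1 / m₀ - (1 / m₀ - 1 / m₁) * ρ ^ 2 :=
  stmt_2_general ρ c₀ c₁ C hρ hc₁ hC hcond r n₀s n₁s hr hn₀ hn₁
end

section
/- For the general M-model MFMC variance v(p; Σ) = σ₀²/n₀ + ∑_{i=1}^{M−1} (1/n_{i−1} − 1/n_i)(wᵢ²σᵢ² − 2wᵢρ_{0,i}σ₀σᵢ) with fixed allocations n₀ ≤ n₁ ≤ … ≤ n_{M−1} (strictly positive), the weights minimizing v are wᵢ* = ρ_{0,i}σ₀/σᵢ, and substituting these yields v(p*; Σ) = σ₀² ∑_{i=0}^{M−1} Sᵢ/nᵢ, where S₀ = 1 − ρ_{0,1}², Sᵢ = ρ_{0,i}² − ρ_{0,i+1}² for 0 < i < M−1, and S_{M−1} = ρ_{0,M−1}². -/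
/-!
Each summand of `v` is `(1/n_{i-1} - 1/n_i)` times the quadratic
`wᵢ²σᵢ² - 2wᵢρᵢσ₀σᵢ = (wᵢσᵢ - ρᵢσ₀)² - ρᵢ²σ₀²`, whose coefficient is positive, so every summand
is minimized separately at `wᵢ = ρᵢσ₀/σᵢ`, with value `-ρᵢ²σ₀²`. The optimal variance is then
`σ₀² (1/n₀ - ∑ (1/n_{i-1} - 1/n_i) ρᵢ²)`, and summation by parts regroups it by `1/nᵢ`, with
coefficients `Sᵢ = rᵢ - r_{i+1}` for `r₀ = 1`, `rᵢ = ρᵢ²` (`0 < i < M`), `r_M = 0`.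
-/

open Finset

section SummationByParts

variable {R : Type*} [CommRing R]

theorem sum_range_sub_succ_mul (f g : ℕ → R) (M : ℕ) :
    ∑ i ∈ range M, (f i - f (i + 1)) * g i =
      g 0 * f 0 - g (M - 1) * f M - ∑ i ∈ Ico 1 M, (g (i - 1) - g i) * f i := by
  induction M with
  | zero => simp
  | succ M ih =>
    rcases M with _ | M
    · simp only [zero_add, range_one, sum_singleton, Nat.sub_self, Ico_self, sum_empty]
      ring
    · rw [sum_range_succ, ih, sum_Ico_succ_top (b := M + 1) (by omega)]
      simp only [Nat.add_sub_cancel]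
      ring

theorem sum_range_mul_eq_of_sub_succ (M : ℕ) (hM : 2 ≤ M) (r S g : ℕ → R)
    (hS0 : S 0 = 1 - r 1)
    (hSmid : ∀ i, 0 < i → i < M - 1 → S i = r i - r (i + 1))
    (hSlast : S (M - 1) = r (M - 1)) :
    ∑ i ∈ range M, S i * g i = g 0 - ∑ i ∈ Ico 1 M, (g (i - 1) - g i) * r i := by
  set f : ℕ → R := fun i => if i = 0 then 1 else if i < M then r i else 0 with hf
  have hS : ∀ i ∈ range M, S i = f i - f (i + 1) := by
    intro i hi
    rw [mem_range] at hi
    rcases Nat.eq_zero_or_pos i with rfl | hpos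
    · simp [hf, hS0, show 1 < M by omega]
    · rcases lt_or_eq_of_le (Nat.le_sub_one_of_lt hi) with hlt | rfl
      · simp [hf, hSmid i hpos hlt, hpos.ne', hi, show i + 1 < M by omega]
      · simp [hf, hSlast, hi, show M - 1 ≠ 0 by omega, show M - 1 + 1 = M by omega,
          show M ≠ 0 by omega]
  have hr : ∀ i ∈ Ico 1 M, f i = r i := by
    intro i hi
    rw [mem_Ico] at hi
    simp [hf, show i ≠ 0 by omega, hi.2]
  rw [sum_congr rfl fun i hi => by rw [hS i hi], sum_range_sub_succ_mul,
    sum_congr rfl fun i hi => by rw [hr i hi]]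
  simp [hf, show M ≠ 0 by omega]

end SummationByParts

theorem pos_of_pos_of_lt_succ {n : ℕ → ℝ} {M : ℕ} (hn0 : 0 < n 0)
    (hn : ∀ i, 1 ≤ i → i < M → n (i - 1) < n i) : ∀ i < M, 0 < n i := by
  intro i hi
  induction i with
  | zero => exact hn0
  | succ k ih => exact (ih (by omega)).trans (hn (k + 1) (by omega) hi)

theorem neg_sq_mul_sq_le (w ρ t s : ℝ) :
    -(ρ ^ 2 * t ^ 2) ≤ w ^ 2 * s ^ 2 - 2 * w * ρ * t * s := by
  nlinarith [sq_nonneg (w * s - ρ * t)]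

theorem div_sq_mul_sq_sub (ρ t : ℝ) {s : ℝ} (hs : s ≠ 0) :
    (ρ * t / s) ^ 2 * s ^ 2 - 2 * (ρ * t / s) * ρ * t * s = -(ρ ^ 2 * t ^ 2) := by
  field_simp
  ring

theorem stmt_9_general (M : ℕ) (hM : 2 ≤ M) (σ ρ n : ℕ → ℝ)
    (hσ : ∀ i < M, 0 < σ i)
    (hn0 : 0 < n 0)
    (hn : ∀ i, 1 ≤ i → i < M → n (i - 1) < n i)
    (v : (ℕ → ℝ) → ℝ)
    (hv : ∀ w, v w = σ 0 ^ 2 / n 0 +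
      ∑ i ∈ Finset.Ico 1 M, (1 / n (i - 1) - 1 / n i) *
        (w i ^ 2 * σ i ^ 2 - 2 * w i * ρ i * σ 0 * σ i))
    (wstar : ℕ → ℝ) (hws : ∀ i, wstar i = ρ i * σ 0 / σ i)
    (S : ℕ → ℝ)
    (hS0 : S 0 = 1 - ρ 1 ^ 2)
    (hSmid : ∀ i, 0 < i → i < M - 1 → S i = ρ i ^ 2 - ρ (i + 1) ^ 2)
    (hSlast : S (M - 1) = ρ (M - 1) ^ 2) :
    (∀ w : ℕ → ℝ, v wstar ≤ v w) ∧
      v wstar = σ 0 ^ 2 * ∑ i ∈ Finset.range M, S i / n i := by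
  have hnpos := pos_of_pos_of_lt_succ hn0 hn
  have hopt : ∀ i ∈ Ico 1 M,
      wstar i ^ 2 * σ i ^ 2 - 2 * wstar i * ρ i * σ 0 * σ i = -(ρ i ^ 2 * σ 0 ^ 2) :=
    fun i hi => hws i ▸ div_sq_mul_sq_sub _ _ (hσ i (mem_Ico.mp hi).2).ne'
  constructor
  · intro w
    rw [hv, hv]
    refine add_le_add_right (sum_le_sum fun i hi => mul_le_mul_of_nonneg_left ?_ ?_) _
    · rw [hopt i hi]
      exact neg_sq_mul_sq_le _ _ _ _
    · obtain ⟨hi1, hiM⟩ := mem_Ico.mp hi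
      exact sub_nonneg.mpr (one_div_le_one_div_of_le (hnpos _ (by omega)) (hn i hi1 hiM).le)
  · rw [hv, sum_congr rfl fun i hi => by rw [hopt i hi],
      sum_congr rfl fun i _ => div_eq_mul_one_div _ _,
      sum_range_mul_eq_of_sub_succ M hM (fun i => ρ i ^ 2) S _ hS0 hSmid hSlast, mul_sub, mul_sum, sub_eq_add_neg, ← sum_neg_distrib]
    congr 1
    · ring
    · exact sum_congr rfl fun i _ => by ring

/-- General M-model MFMC: for
`v(w) = σ₀²/n₀ + ∑_{i=1}^{M−1} (1/n_{i−1} − 1/n_i)(wᵢ²σᵢ² − 2wᵢρᵢσ₀σᵢ)`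
with fixed strictly increasing positive allocations, the minimizing weights
are `wᵢ* = ρᵢσ₀/σᵢ`, and substituting them yields
`v(w*) = σ₀² ∑_{i<M} Sᵢ/nᵢ` with `S₀ = 1 − ρ₁²`, `Sᵢ = ρᵢ² − ρ_{i+1}²`
for `0 < i < M−1`, and `S_{M−1} = ρ_{M−1}²`. -/
theorem stmt_9 (M : ℕ) (hM : 2 ≤ M) (σ ρ n : ℕ → ℝ)
    (hσ : ∀ i < M, 0 < σ i)
    (hρ : ∀ i, 1 ≤ i → i < M → ρ i ∈ Set.Ioo (-1 : ℝ) 1)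
    (hn0 : 0 < n 0)
    (hn : ∀ i, 1 ≤ i → i < M → n (i - 1) < n i)
    (v : (ℕ → ℝ) → ℝ)
    (hv : ∀ w, v w = σ 0 ^ 2 / n 0 +
      ∑ i ∈ Finset.Ico 1 M, (1 / n (i - 1) - 1 / n i) *
        (w i ^ 2 * σ i ^ 2 - 2 * w i * ρ i * σ 0 * σ i))
    (wstar : ℕ → ℝ) (hws : ∀ i, wstar i = ρ i * σ 0 / σ i)
    (S : ℕ → ℝ)
    (hS0 : S 0 = 1 - ρ 1 ^ 2)
    (hSmid : ∀ i, 0 < i → i < M - 1 → S i = ρ i ^ 2 - ρ (i + 1) ^ 2)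
    (hSlast : S (M - 1) = ρ (M - 1) ^ 2) :
    (∀ w : ℕ → ℝ, v wstar ≤ v w) ∧
      v wstar = σ 0 ^ 2 * ∑ i ∈ Finset.range M, S i / n i :=
  stmt_9_general M hM σ ρ n hσ hn0 hn v hv wstar hws S hS0 hSmid hSlast
end

section
/- For the two-term isotonic problem: minimize S₀/n₀ + S₁/n₁ over 0 < n₀ ≤ n₁ with c₀n₀ + c₁n₁ = C, if S₀/c₀ > S₁/c₁ (a pooling violation) then the minimum is attained at n₀ = n₁ = C/(c₀ + c₁), with minimum value (S₀ + S₁)(c₀ + c₁)/C. -/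
/-!
Multiplying the objective by the budget `c₀ n₀ + c₁ n₁` and clearing denominators, the gap to the
pooled value `(S₀ + S₁)(c₀ + c₁)` becomes `(n₁ - n₀)(S₀ c₁ n₁ - S₁ c₀ n₀) / (n₀ n₁)`. Both factors
are nonnegative on the feasible set `n₀ ≤ n₁` exactly when the ratio order is violated,
`S₁ c₀ ≤ S₀ c₁`, so the best feasible point is on the boundary `n₀ = n₁`.
-/

theorem cost_mul_objective_sub_pooled {S₀ S₁ c₀ c₁ n₀ n₁ : ℝ} (hn₀ : n₀ ≠ 0) (hn₁ : n₁ ≠ 0) :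
    (c₀ * n₀ + c₁ * n₁) * (S₀ / n₀ + S₁ / n₁) - (S₀ + S₁) * (c₀ + c₁) =
      (n₁ - n₀) * (S₀ * c₁ * n₁ - S₁ * c₀ * n₀) / (n₀ * n₁) := by
  field_simp
  ring

theorem pooled_le_cost_mul_objective {S₀ S₁ c₀ c₁ n₀ n₁ : ℝ} (hS₀ : 0 ≤ S₀) (hc₁ : 0 ≤ c₁)
    (hn₀ : 0 < n₀) (hn : n₀ ≤ n₁) (hratio : S₁ * c₀ ≤ S₀ * c₁) :
    (S₀ + S₁) * (c₀ + c₁) ≤ (c₀ * n₀ + c₁ * n₁) * (S₀ / n₀ + S₁ / n₁) := by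
  have hn₁ : 0 < n₁ := hn₀.trans_le hn
  have hgap : 0 ≤ S₀ * c₁ * n₁ - S₁ * c₀ * n₀ := by
    have := mul_le_mul_of_nonneg_left hn (mul_nonneg hS₀ hc₁)
    nlinarith [mul_le_mul_of_nonneg_right hratio hn₀.le]
  have hdiff := cost_mul_objective_sub_pooled (S₀ := S₀) (S₁ := S₁) (c₀ := c₀) (c₁ := c₁)
    hn₀.ne' hn₁.ne'
  have : 0 ≤ (n₁ - n₀) * (S₀ * c₁ * n₁ - S₁ * c₀ * n₀) / (n₀ * n₁) := by
    have := sub_nonneg.mpr hn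
    positivity
  linarith

theorem stmt_11_general (S₀ S₁ c₀ c₁ C : ℝ) (hS₀ : 0 < S₀)
    (hc₀ : 0 < c₀) (hc₁ : 0 < c₁)
    (hviol : S₀ / c₀ > S₁ / c₁) :
    (c₀ * (C / (c₀ + c₁)) + c₁ * (C / (c₀ + c₁)) = C) ∧
    (S₀ / (C / (c₀ + c₁)) + S₁ / (C / (c₀ + c₁)) = (S₀ + S₁) * (c₀ + c₁) / C) ∧
    (∀ n₀ n₁ : ℝ, 0 < n₀ → n₀ ≤ n₁ → c₀ * n₀ + c₁ * n₁ = C →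
      (S₀ + S₁) * (c₀ + c₁) / C ≤ S₀ / n₀ + S₁ / n₁) := by
  have hc : c₀ + c₁ ≠ 0 := (add_pos hc₀ hc₁).ne'
  have hratio : S₁ * c₀ ≤ S₀ * c₁ := by
    rw [gt_iff_lt, div_lt_div_iff₀ hc₁ hc₀] at hviol
    exact hviol.le
  refine ⟨by rw [← add_mul, mul_div_cancel₀ _ hc], by rw [div_div_eq_mul_div, div_div_eq_mul_div,
    ← add_div, add_mul], ?_⟩
  rintro n₀ n₁ hn₀ hn rfl
  have hn₁ : 0 < n₁ := hn₀.trans_le hn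
  rw [div_le_iff₀ (by positivity), mul_comm _ (c₀ * n₀ + c₁ * n₁)]
  exact pooled_le_cost_mul_objective hS₀.le hc₁.le hn₀ hn hratio

/-- Two-term isotonic problem: minimize `S₀/n₀ + S₁/n₁` over `0 < n₀ ≤ n₁`
with `c₀n₀ + c₁n₁ = C`.  If `S₀/c₀ > S₁/c₁` (a pooling violation) then the
minimum is attained at `n₀ = n₁ = C/(c₀ + c₁)`, with minimum value
`(S₀ + S₁)(c₀ + c₁)/C`. -/
theorem stmt_11 (S₀ S₁ c₀ c₁ C : ℝ) (hS₀ : 0 < S₀) (hS₁ : 0 < S₁)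
    (hc₀ : 0 < c₀) (hc₁ : 0 < c₁) (hC : 0 < C)
    (hviol : S₀ / c₀ > S₁ / c₁) :
    (c₀ * (C / (c₀ + c₁)) + c₁ * (C / (c₀ + c₁)) = C) ∧
    (S₀ / (C / (c₀ + c₁)) + S₁ / (C / (c₀ + c₁)) = (S₀ + S₁) * (c₀ + c₁) / C) ∧
    (∀ n₀ n₁ : ℝ, 0 < n₀ → n₀ ≤ n₁ → c₀ * n₀ + c₁ * n₁ = C →
      (S₀ + S₁) * (c₀ + c₁) / C ≤ S₀ / n₀ + S₁ / n₁) :=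
  stmt_11_general S₀ S₁ c₀ c₁ C hS₀ hc₀ hc₁ hviol
end

section
/- Under the continuous relaxation and the condition c₀(1−ρ²) ≥ c₁ρ² failing — i.e., c₀/c₁ < ρ²/(1−ρ²) holding so that r = √(c₀ρ²/(c₁(1−ρ²))) > 1 — the optimal bi-fidelity MFMC variance (√(c₀(1−ρ²)) + √(c₁)ρ)²/C is strictly smaller than the hifi-only MC variance c₀/C if and only if √(1−ρ²) + √(c₁/c₀)·ρ < 1, which holds iff ρ² > 4(c₁/c₀)/(1 + c₁/c₀)² ... equivalently iff ρ > 2√(c₀c₁)/(c₀ + c₁). -/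
/-!
Write `κ = c₁/c₀`. Since `√c₁ = √c₀ · √κ`, the MFMC standard deviation is `√c₀` times
`√(1−ρ²) + √κ ρ`, which gives the first equivalence. For the second, with `t = √κ` the identity
`(1 − tρ)² − (1 − ρ²) = ρ (ρ(1 + t²) − 2t)` shows that `√(1−ρ²) < 1 − tρ` exactly when `ρ`
exceeds the crossover `2√κ/(1+κ)`, whose square is `4κ/(1+κ)²` and which equals
`2√(c₀c₁)/(c₀+c₁)`.
-/

open Real

theorem sq_sqrt_mul_lt_iff {c x : ℝ} (hc : 0 < c) (hx : 0 ≤ x) : (√c * x) ^ 2 < c ↔ x < 1 := by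
  rw [mul_pow, sq_sqrt hc.le, mul_lt_iff_lt_one_right hc, sq_lt_one_iff₀ hx]

theorem sqrt_mul_add_sqrt_mul_eq {c₀ : ℝ} (hc₀ : 0 < c₀) (a c₁ ρ : ℝ) :
    √(c₀ * a) + √c₁ * ρ = √c₀ * (√a + √(c₁ / c₀) * ρ) := by
  have hsqrt : √c₁ = √c₀ * √(c₁ / c₀) := by
    rw [← sqrt_mul hc₀.le, mul_div_cancel₀ c₁ hc₀.ne']
  rw [sqrt_mul hc₀.le, hsqrt]
  ring

theorem sqrt_one_sub_sq_add_mul_lt_one_iff {t ρ : ℝ} (hρ : 0 < ρ) (htρ : t * ρ < 1) :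
    √(1 - ρ ^ 2) + t * ρ < 1 ↔ 2 * t < ρ * (1 + t ^ 2) := by
  have hgap : (1 - t * ρ) ^ 2 - (1 - ρ ^ 2) = ρ * (ρ * (1 + t ^ 2) - 2 * t) := by ring
  rw [← lt_sub_iff_add_lt, sqrt_lt' (sub_pos.mpr htρ), ← sub_pos, hgap,
    mul_pos_iff_of_pos_left hρ, sub_pos]

theorem sqrt_one_sub_sq_add_sqrt_mul_lt_one_iff {κ ρ : ℝ} (hκ₀ : 0 ≤ κ) (hκ₁ : κ ≤ 1)
    (hρ₀ : 0 < ρ) (hρ₁ : ρ < 1) :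
    √(1 - ρ ^ 2) + √κ * ρ < 1 ↔ 2 * √κ / (1 + κ) < ρ := by
  have htρ : √κ * ρ < 1 :=
    mul_lt_one_of_nonneg_of_lt_one_right (sqrt_le_one.mpr hκ₁) hρ₀.le hρ₁
  rw [sqrt_one_sub_sq_add_mul_lt_one_iff hρ₀ htρ, sq_sqrt hκ₀, div_lt_iff₀ (by positivity)]

theorem four_mul_div_one_add_sq_lt_sq_iff {κ ρ : ℝ} (hκ : 0 ≤ κ) (hρ : 0 ≤ ρ) :
    4 * κ / (1 + κ) ^ 2 < ρ ^ 2 ↔ 2 * √κ / (1 + κ) < ρ := by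
  have hsq : 4 * κ / (1 + κ) ^ 2 = (2 * √κ / (1 + κ)) ^ 2 := by
    rw [div_pow, mul_pow, sq_sqrt hκ]
    norm_num
  rw [hsq, pow_lt_pow_iff_left₀ (by positivity) hρ two_ne_zero]

theorem two_sqrt_mul_div_add_eq {c₀ : ℝ} (hc₀ : 0 < c₀) (c₁ : ℝ) :
    2 * √(c₀ * c₁) / (c₀ + c₁) = 2 * √(c₁ / c₀) / (1 + c₁ / c₀) := by
  have hsqrt : √(c₀ * c₁) = c₀ * √(c₁ / c₀) := by
    rw [← sqrt_sq hc₀.le, ← sqrt_mul (sq_nonneg c₀), sqrt_sq hc₀.le]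
    field_simp
  rw [hsqrt]
  field_simp

theorem stmt_19_general (ρ c₀ c₁ C : ℝ) (hρ : ρ ∈ Set.Ioo (0 : ℝ) 1)
    (hc₁ : 0 < c₁) (hc : c₁ < c₀) (hC : 0 < C) :
    ((Real.sqrt (c₀ * (1 - ρ ^ 2)) + Real.sqrt c₁ * ρ) ^ 2 / C < c₀ / C ↔
      Real.sqrt (1 - ρ ^ 2) + Real.sqrt (c₁ / c₀) * ρ < 1) ∧
    (Real.sqrt (1 - ρ ^ 2) + Real.sqrt (c₁ / c₀) * ρ < 1 ↔
      ρ ^ 2 > 4 * (c₁ / c₀) / (1 + c₁ / c₀) ^ 2) ∧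
    (ρ ^ 2 > 4 * (c₁ / c₀) / (1 + c₁ / c₀) ^ 2 ↔
      ρ > 2 * Real.sqrt (c₀ * c₁) / (c₀ + c₁)) := by
  obtain ⟨hρ₀, hρ₁⟩ := hρ
  have hc₀ : 0 < c₀ := hc₁.trans hc
  have hκ₀ : 0 ≤ c₁ / c₀ := div_nonneg hc₁.le hc₀.le
  have hκ₁ : c₁ / c₀ ≤ 1 := (div_le_one hc₀).mpr hc.le
  refine ⟨?_, ?_, ?_⟩
  · rw [div_lt_div_iff_of_pos_right hC, sqrt_mul_add_sqrt_mul_eq hc₀]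
    exact sq_sqrt_mul_lt_iff hc₀ (by positivity)
  · rw [sqrt_one_sub_sq_add_sqrt_mul_lt_one_iff hκ₀ hκ₁ hρ₀ hρ₁, gt_iff_lt,
      four_mul_div_one_add_sq_lt_sq_iff hκ₀ hρ₀.le]
  · rw [gt_iff_lt, four_mul_div_one_add_sq_lt_sq_iff hκ₀ hρ₀.le, gt_iff_lt,
      two_sqrt_mul_div_add_eq hc₀]

/-- The optimal bi-fidelity MFMC variance `(√(c₀(1−ρ²)) + √(c₁)ρ)²/C` is
strictly smaller than the hifi-only MC variance `c₀/C` iff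
`√(1−ρ²) + √(c₁/c₀)·ρ < 1`, iff `ρ² > 4(c₁/c₀)/(1 + c₁/c₀)²`, equivalently
iff `ρ > 2√(c₀c₁)/(c₀ + c₁)`. -/
theorem stmt_19 (ρ c₀ c₁ C : ℝ) (hρ : ρ ∈ Set.Ioo (0 : ℝ) 1)
    (hc₁ : 0 < c₁) (hc : c₁ < c₀) (hC : 0 < C)
    (hcond : c₀ / c₁ > ρ⁻¹ ^ 2 - 1) :
    ((Real.sqrt (c₀ * (1 - ρ ^ 2)) + Real.sqrt c₁ * ρ) ^ 2 / C < c₀ / C ↔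
      Real.sqrt (1 - ρ ^ 2) + Real.sqrt (c₁ / c₀) * ρ < 1) ∧
    (Real.sqrt (1 - ρ ^ 2) + Real.sqrt (c₁ / c₀) * ρ < 1 ↔
      ρ ^ 2 > 4 * (c₁ / c₀) / (1 + c₁ / c₀) ^ 2) ∧
    (ρ ^ 2 > 4 * (c₁ / c₀) / (1 + c₁ / c₀) ^ 2 ↔
      ρ > 2 * Real.sqrt (c₀ * c₁) / (c₀ + c₁)) :=
  stmt_19_general ρ c₀ c₁ C hρ hc₁ hc hC
end
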